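/- arXiv:1402.2854 — 6 statements merged into one kernel-verified Lean document; each statement's English description precedes it below -/
import Mathlib

section
/- In any graph where each vertex initially has weight 1 and weight can be moved from a vertex u to a neighbor v only if the weight on v is at least the weight on u (transferring all of u's weight), a vertex v can acquire total weight at most 2^{d(v)}, where d(v) is the degree of v. Consequently, if v acquires weight w, then d(v) ≥ log₂ w. -/
/-- A total acquisition move in graph `G`: all the (positive) weight of `u` is moved
onto an adjacent vertex `v` whose weight is at least that of `u`. -/
def AcqMove {V : Type*} [DecidableEq V] (G : SimpleGraph V) (w w' : V → ℕ) : Prop :=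
  ∃ u v, G.Adj u v ∧ 0 < w u ∧ w u ≤ w v ∧
    w' = Function.update (Function.update w u 0) v (w v + w u)

/-- A weight configuration reachable from another by a sequence of acquisition moves. -/
def AcqReach {V : Type*} [DecidableEq V] (G : SimpleGraph V) : (V → ℕ) → (V → ℕ) → Prop :=
  Relation.ReflTransGen (AcqMove G)

lemma acq_inv_step {V : Type*} [Fintype V] [DecidableEq V] (G : SimpleGraph V)
    [DecidableRel G.Adj] {w w' : V → ℕ}
    (hw : ∀ x, w x ≤ 2 ^ ((G.neighborFinset x).filter (fun y => w y = 0)).card)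
    (hm : AcqMove G w w') :
    ∀ x, w' x ≤ 2 ^ ((G.neighborFinset x).filter (fun y => w' y = 0)).card := by
  obtain ⟨u, v, hadj, hu, huv, rfl⟩ := hm
  have hne : u ≠ v := G.ne_of_adj hadj
  have hv0 : 0 < w v := lt_of_lt_of_le hu huv
  have hw'u : Function.update (Function.update w u 0) v (w v + w u) u = 0 := by
    simp [Function.update, hne]
  have hw'def : ∀ y, y ≠ u → y ≠ v →
      Function.update (Function.update w u 0) v (w v + w u) y = w y := by
    intro y h1 h2; simp [Function.update, h1, h2]
  intro x
  by_cases hxu : x = u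
  · subst hxu; rw [hw'u]; exact Nat.zero_le _
  by_cases hxv : x = v
  · rw [hxv]
    have hval : Function.update (Function.update w u 0) v (w v + w u) v = w v + w u := by
      simp [Function.update]
    rw [hval]
    have hsub : insert u ((G.neighborFinset v).filter (fun y => w y = 0)) ⊆
        (G.neighborFinset v).filter
          (fun y => Function.update (Function.update w u 0) v (w v + w u) y = 0) := by
      intro y hy
      rcases Finset.mem_insert.mp hy with rfl | hy
      · exact Finset.mem_filter.mpr ⟨(G.mem_neighborFinset _ _).mpr hadj.symm, hw'u⟩
      · obtain ⟨hmem, h0⟩ := Finset.mem_filter.mp hy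
        have hyu : y ≠ u := fun h => by subst h; omega
        have hyv : y ≠ v := fun h => by subst h; omega
        exact Finset.mem_filter.mpr ⟨hmem, by rw [hw'def y hyu hyv]; exact h0⟩
    have hnotmem : u ∉ (G.neighborFinset v).filter (fun y => w y = 0) := by
      intro h; have := (Finset.mem_filter.mp h).2; omega
    have hcard : ((G.neighborFinset v).filter (fun y => w y = 0)).card + 1 ≤
        ((G.neighborFinset v).filter
          (fun y => Function.update (Function.update w u 0) v (w v + w u) y = 0)).card := by
      have := Finset.card_le_card hsub
      rwa [Finset.card_insert_of_notMem hnotmem] at this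
    calc w v + w u ≤ 2 * w v := by omega
    _ ≤ 2 * 2 ^ ((G.neighborFinset v).filter (fun y => w y = 0)).card :=
        Nat.mul_le_mul_left 2 (hw v)
    _ = 2 ^ (((G.neighborFinset v).filter (fun y => w y = 0)).card + 1) := by ring
    _ ≤ _ := Nat.pow_le_pow_right (by norm_num) hcard
  · rw [hw'def x hxu hxv]
    refine le_trans (hw x) (Nat.pow_le_pow_right (by norm_num) (Finset.card_le_card ?_))
    intro y hy
    obtain ⟨hmem, h0⟩ := Finset.mem_filter.mp hy
    have hyu : y ≠ u := fun h => by subst h; omega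
    have hyv : y ≠ v := fun h => by subst h; omega
    exact Finset.mem_filter.mpr ⟨hmem, by rw [hw'def y hyu hyv]; exact h0⟩

/-- Starting from the all-ones configuration, a vertex `v` can never hold weight more than
`2 ^ d(v)`; equivalently, if `v` holds weight `w v` then its degree is at least `log₂ (w v)`. -/
theorem stmt0 {V : Type*} [Fintype V] [DecidableEq V] (G : SimpleGraph V)
    [DecidableRel G.Adj] (w : V → ℕ) (h : AcqReach G (fun _ => 1) w) (v : V) :
    w v ≤ 2 ^ G.degree v ∧ Nat.log 2 (w v) ≤ G.degree v := by
  have hinv : ∀ x, w x ≤ 2 ^ ((G.neighborFinset x).filter (fun y => w y = 0)).card := by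
    induction h with
    | refl => intro x; exact Nat.one_le_two_pow
    | tail _ hm ih => exact acq_inv_step G ih hm
  have hle : w v ≤ 2 ^ G.degree v := by
    refine le_trans (hinv v) (Nat.pow_le_pow_right (by norm_num) ?_)
    rw [← G.card_neighborFinset_eq_degree]
    exact Finset.card_le_card (Finset.filter_subset _ _)
  refine ⟨hle, ?_⟩
  calc Nat.log 2 (w v) ≤ Nat.log 2 (2 ^ G.degree v) := Nat.log_mono_right hle
  _ = G.degree v := Nat.log_pow (b := 2) one_lt_two _
end

section
/- If T is a tree rooted at r that has the cut-off property, then r can acquire all the weight of T via total acquisition moves; in particular, the total acquisition number of T is 1. -/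
/-!
Induction on the size of the subtree of `v`. The vertex `v` absorbs its children's subtrees
`T₁, T₂, …` in the order given by the cut-off property: each child `vᵢ` first gathers all of `Tᵢ`
(induction hypothesis, the weights there are still `1`) and then moves it to `v`. This move is
legal because `v` then holds `1 + |T₁| + ⋯ + |Tᵢ₋₁| ≥ 2 ^ min(i - 1, i') ≥ |Tᵢ|`. Since moves
preserve the total weight, no maximal sequence ends with fewer than one positive vertex.
-/

open Finset

/-- No legal acquisition move remains. -/
def AcqMaximal {V : Type*} [DecidableEq V] (G : SimpleGraph V) (w : V → ℕ) : Prop :=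
  ¬ ∃ w', AcqMove G w w'

/-- The size of the residual set (vertices with positive weight). -/
noncomputable def residualCard {V : Type*} (w : V → ℕ) : ℕ :=
  Nat.card {v : V // 0 < w v}

/-- The total acquisition number: the minimum size of a residual set over all
maximal sequences of acquisition moves starting from the all-ones configuration. -/
noncomputable def atNum {V : Type*} [DecidableEq V] (G : SimpleGraph V) : ℕ :=
  sInf { k | ∃ w, AcqReach G (fun _ => 1) w ∧ AcqMaximal G w ∧ residualCard w = k }

/-- A finite rooted tree, given by a parent function. -/
structure RTree (V : Type*) where
  parent : V → V
  root : V
  root_fixed : parent root = root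
  reach : ∀ v, ∃ n, parent^[n] v = root

open scoped Classical in
/-- The subtree (set of descendants, including `v` itself) rooted at `v`. -/
noncomputable def RTree.subtree {V : Type*} [Fintype V] (T : RTree V) (v : V) :
    Finset V :=
  Finset.univ.filter fun u => ∃ n, T.parent^[n] u = v

/-- `u` is a child of `v`. -/
def RTree.isChild {V : Type*} (T : RTree V) (u v : V) : Prop :=
  u ≠ T.root ∧ T.parent u = v

/-- The underlying (undirected) graph of a rooted tree. -/
def RTree.graph {V : Type*} (T : RTree V) : SimpleGraph V :=
  SimpleGraph.fromRel fun u v => u ≠ T.root ∧ T.parent u = v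

/-- The cut-off property: for each vertex `v`, its children can be enumerated
`v₁, …, v_k` so that, for some `i'`, the subtree rooted at `vᵢ` has exactly `2^(i-1)`
vertices for `i ≤ i'` and at most `2^(i')` vertices for `i > i'`
(here stated with 0-based indices). -/
def RTree.CutOff {V : Type*} [Fintype V] (T : RTree V) : Prop :=
  ∀ v : V, ∃ l : List V, l.Nodup ∧ (∀ u, u ∈ l ↔ T.isChild u v) ∧
    ∃ i' : ℕ,
      (∀ (i : ℕ) (h : i < l.length), i < i' → (T.subtree l[i]).card = 2 ^ i) ∧
      (∀ (i : ℕ) (h : i < l.length), i' ≤ i → (T.subtree l[i]).card ≤ 2 ^ i')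

namespace RTree

variable {V : Type*} (T : RTree V)

lemma iterate_parent_root (n : ℕ) : T.parent^[n] T.root = T.root :=
  Function.iterate_fixed T.root_fixed n

lemma eq_root_of_isPeriodicPt {x : V} {m : ℕ} (hm : 0 < m)
    (hx : Function.IsPeriodicPt T.parent m x) : x = T.root := by
  obtain ⟨n, hn⟩ := T.reach x
  have hnm : n ≤ n * m := Nat.le_mul_of_pos_right n hm
  calc x = T.parent^[n * m - n] (T.parent^[n] x) := by
        rw [← Function.iterate_add_apply, Nat.sub_add_cancel hnm]
        exact (hx.const_mul n).symm
    _ = T.root := by rw [hn, iterate_parent_root]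

variable {T}

lemma iterate_parent_ne_of_isChild {u v : V} (h : T.isChild u v) (n : ℕ) :
    T.parent^[n] v ≠ u := by
  intro hn
  refine h.1 (T.eq_root_of_isPeriodicPt (Nat.succ_pos n) ?_)
  rw [Function.IsPeriodicPt, Function.IsFixedPt, Function.iterate_succ_apply, h.2, hn]

lemma adj_of_isChild {u v : V} (h : T.isChild u v) : T.graph.Adj u v := by
  refine SimpleGraph.fromRel_adj _ _ _ |>.2 ⟨?_, Or.inl h⟩
  exact fun huv => iterate_parent_ne_of_isChild h 0 huv.symm

variable [Fintype V]

@[simp]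
lemma mem_subtree {u v : V} : u ∈ T.subtree v ↔ ∃ n, T.parent^[n] u = v := by
  simp [RTree.subtree]

lemma self_mem_subtree (v : V) : v ∈ T.subtree v := mem_subtree.2 ⟨0, rfl⟩

lemma subtree_subset_of_isChild {u v : V} (h : T.isChild u v) : T.subtree u ⊆ T.subtree v := by
  intro x hx
  obtain ⟨n, hn⟩ := mem_subtree.1 hx
  exact mem_subtree.2 ⟨n + 1, by rw [Function.iterate_succ_apply', hn, h.2]⟩

lemma notMem_subtree_of_isChild {u v : V} (h : T.isChild u v) : v ∉ T.subtree u := by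
  simpa using iterate_parent_ne_of_isChild h

lemma card_subtree_lt_of_isChild {u v : V} (h : T.isChild u v) :
    (T.subtree u).card < (T.subtree v).card :=
  Finset.card_lt_card <| (Finset.ssubset_iff_of_subset (subtree_subset_of_isChild h)).2
    ⟨v, self_mem_subtree v, notMem_subtree_of_isChild h⟩

lemma disjoint_subtree_of_isChild {u₁ u₂ v : V} (h₁ : T.isChild u₁ v) (h₂ : T.isChild u₂ v)
    (hne : u₁ ≠ u₂) : Disjoint (T.subtree u₁) (T.subtree u₂) := by
  rw [Finset.disjoint_left]
  intro x hx₁ hx₂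
  obtain ⟨m, hm⟩ := mem_subtree.1 hx₁
  obtain ⟨n, hn⟩ := mem_subtree.1 hx₂
  wlog hmn : m ≤ n generalizing u₁ u₂ m n
  · exact this h₂ h₁ hne.symm hx₂ hx₁ n hn m hm (by omega)
  obtain ⟨k, rfl⟩ := Nat.exists_eq_add_of_le' hmn
  rw [Function.iterate_add_apply, hm] at hn
  cases k with
  | zero => exact hne hn
  | succ k =>
    rw [Function.iterate_succ_apply, h₁.2] at hn
    exact iterate_parent_ne_of_isChild h₂ k hn

lemma exists_isChild_mem_subtree {x v : V} (hx : x ∈ T.subtree v) (hxv : x ≠ v) :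
    ∃ u, T.isChild u v ∧ x ∈ T.subtree u := by
  obtain ⟨n, hn⟩ := mem_subtree.1 hx
  induction n with
  | zero => exact absurd hn hxv
  | succ k ih =>
    rw [Function.iterate_succ_apply'] at hn
    by_cases hk : T.parent^[k] x = T.root
    · exact ih (by rw [← hn, hk, T.root_fixed])
    · exact ⟨_, ⟨hk, hn⟩, mem_subtree.2 ⟨k, rfl⟩⟩

lemma subtree_root : T.subtree T.root = Finset.univ := by
  ext x
  simpa using T.reach x

lemma subtree_eq_insert_biUnion [DecidableEq V] {v : V} {l : List V}
    (hl : ∀ u, u ∈ l ↔ T.isChild u v) :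
    T.subtree v = insert v (l.toFinset.biUnion T.subtree) := by
  ext x
  simp only [Finset.mem_insert, Finset.mem_biUnion, List.mem_toFinset, hl]
  constructor
  · intro hx
    by_cases hxv : x = v
    · exact Or.inl hxv
    · exact Or.inr (exists_isChild_mem_subtree hx hxv)
  · rintro (rfl | ⟨u, hu, hxu⟩)
    · exact self_mem_subtree x
    · exact subtree_subset_of_isChild hu hxu

end RTree

lemma le_one_add_sum_take_of_cutoff {s : List ℕ} {i' : ℕ}
    (hlt : ∀ (i : ℕ) (h : i < s.length), i < i' → s[i] = 2 ^ i)
    (hge : ∀ (i : ℕ) (h : i < s.length), i' ≤ i → s[i] ≤ 2 ^ i')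
    (j : ℕ) (hj : j < s.length) : s[j] ≤ 1 + (s.take j).sum := by
  have hpow : ∀ k ≤ s.length, 2 ^ min k i' ≤ 1 + (s.take k).sum := by
    intro k hk
    induction k with
    | zero => simp
    | succ k ih =>
      have ih := ih (by omega)
      rw [List.sum_take_succ _ _ hk]
      rcases lt_or_ge k i' with hki | hki
      · rw [hlt k hk hki, min_eq_left hki, pow_succ]
        rw [min_eq_left hki.le] at ih
        omega
      · rw [min_eq_right (by omega)]
        rw [min_eq_right hki] at ih
        omega
  refine le_trans ?_ (hpow j hj.le)
  rcases lt_or_ge j i' with hji | hji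
  · rw [hlt j hj hji, min_eq_left hji.le]
  · rw [min_eq_right hji]
    exact hge j hj hji

section Acquisition

variable {V : Type*} [DecidableEq V]

def collectAt (w : V → ℕ) (S : Finset V) (v : V) : V → ℕ :=
  fun x => if x = v then ∑ y ∈ S, w y else if x ∈ S then 0 else w x

@[simp]
lemma collectAt_self (w : V → ℕ) (S : Finset V) (v : V) : collectAt w S v v = ∑ y ∈ S, w y :=
  if_pos rfl

lemma collectAt_of_notMem {w : V → ℕ} {S : Finset V} {v x : V} (hxS : x ∉ S) (hxv : x ≠ v) :
    collectAt w S v x = w x := by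
  simp [collectAt, hxS, hxv]

lemma collectAt_singleton (w : V → ℕ) (v : V) : collectAt w {v} v = w := by
  funext x
  by_cases hx : x = v <;> simp [collectAt, hx]

variable {G : SimpleGraph V}

lemma acqMove_collectAt_union {w : V → ℕ} {R S : Finset V} {u v : V} (hRS : Disjoint R S)
    (hv : v ∈ R) (hu : u ∈ S) (hadj : G.Adj u v) (hpos : 0 < ∑ x ∈ S, w x)
    (hle : ∑ x ∈ S, w x ≤ ∑ x ∈ R, w x) :
    AcqMove G (collectAt (collectAt w R v) S u) (collectAt w (R ∪ S) v) := by
  have hvS : v ∉ S := Finset.disjoint_left.1 hRS hv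
  have hsumS : ∑ x ∈ S, collectAt w R v x = ∑ x ∈ S, w x :=
    Finset.sum_congr rfl fun x hx =>
      collectAt_of_notMem (Finset.disjoint_right.1 hRS hx) (ne_of_mem_of_not_mem hx hvS)
  have hcv : collectAt (collectAt w R v) S u v = ∑ x ∈ R, w x := by
    rw [collectAt_of_notMem hvS hadj.ne.symm, collectAt_self]
  refine ⟨u, v, hadj, by rwa [collectAt_self, hsumS], by rwa [collectAt_self, hsumS, hcv], ?_⟩
  funext x
  rcases eq_or_ne x v with rfl | hxv
  · rw [Function.update_self, hcv, collectAt_self, collectAt_self, hsumS, Finset.sum_union hRS]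
  rcases eq_or_ne x u with rfl | hxu
  · simp [collectAt, hxv, hu]
  · simp only [Function.update_of_ne hxv, Function.update_of_ne hxu, collectAt, if_neg hxv,
      if_neg hxu, Finset.mem_union]
    by_cases hxS : x ∈ S <;> simp [hxS]

lemma AcqMove.sum_eq [Fintype V] {w w' : V → ℕ} (h : AcqMove G w w') :
    ∑ x, w' x = ∑ x, w x := by
  obtain ⟨u, v, hadj, -, -, rfl⟩ := h
  have hu : u ∈ Finset.univ \ {v} := by simpa using hadj.ne
  rw [Finset.sum_update_of_mem (Finset.mem_univ v), Finset.sum_update_of_mem hu,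
    Finset.sum_eq_add_sum_sdiff_singleton_of_mem (Finset.mem_univ v),
    Finset.sum_eq_add_sum_sdiff_singleton_of_mem hu]
  ring

lemma AcqReach.sum_eq [Fintype V] {w w' : V → ℕ} (h : AcqReach G w w') :
    ∑ x, w' x = ∑ x, w x := by
  induction h with
  | refl => rfl
  | tail _ hmove ih => rw [hmove.sum_eq, ih]

lemma residualCard_pos_of_reach [Fintype V] [Nonempty V] {w : V → ℕ}
    (h : AcqReach G (fun _ => 1) w) : 0 < residualCard w := by
  have hsum : ∑ x, w x ≠ 0 := by
    simp [h.sum_eq]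
  obtain ⟨x, -, hx⟩ := Finset.exists_ne_zero_of_sum_ne_zero hsum
  have : Nonempty {v // 0 < w v} := ⟨⟨x, Nat.pos_of_ne_zero hx⟩⟩
  exact Nat.card_pos

lemma residualCard_eq_one {w : V → ℕ} {r : V} (hr : 0 < w r) (hw : ∀ u, u ≠ r → w u = 0) :
    residualCard w = 1 := by
  refine Nat.card_eq_one_iff_exists.2 ⟨⟨r, hr⟩, fun ⟨u, hu⟩ => Subtype.ext ?_⟩
  by_contra hur
  simp [hw u hur] at hu

lemma acqMaximal_of_eq_zero {w : V → ℕ} {r : V} (hw : ∀ u, u ≠ r → w u = 0) :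
    AcqMaximal G w := by
  rintro ⟨-, u, v, hadj, hpos, hle, -⟩
  obtain rfl : u = r := by
    by_contra hur
    simp [hw u hur] at hpos
  rw [hw v hadj.ne'] at hle
  omega

lemma atNum_eq_one_of_reach [Fintype V] {w : V → ℕ} {r : V} (h : AcqReach G (fun _ => 1) w)
    (hr : 0 < w r) (hw : ∀ u, u ≠ r → w u = 0) : atNum G = 1 := by
  have : Nonempty V := ⟨r⟩
  have hmem : ∃ w, AcqReach G (fun _ => 1) w ∧ AcqMaximal G w ∧ residualCard w = 1 :=
    ⟨w, h, acqMaximal_of_eq_zero hw, residualCard_eq_one hr hw⟩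
  refine le_antisymm (Nat.sInf_le hmem) (le_csInf ⟨1, hmem⟩ ?_)
  rintro k ⟨w', h', -, rfl⟩
  exact residualCard_pos_of_reach h'

end Acquisition

namespace RTree

variable {V : Type*} [Fintype V] [DecidableEq V] {T : RTree V}

lemma reach_collectAt_union_subtrees {v : V} {w : V → ℕ}
    (hgather : ∀ u, T.isChild u v → ∀ w' : V → ℕ, (∀ x ∈ T.subtree u, w' x = 1) →
      AcqReach T.graph w' (collectAt w' (T.subtree u) u)) :
    -- `R` is the part of the subtree of `v` already collected at `v`
    ∀ (l : List V) (R : Finset V), l.Nodup → (∀ u ∈ l, T.isChild u v) →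
      (∀ u ∈ l, ∀ x ∈ T.subtree u, w x = 1) → v ∈ R → (∀ u ∈ l, Disjoint R (T.subtree u)) →
      (∀ (j : ℕ) (hj : j < l.length),
        (T.subtree l[j]).card ≤ ∑ x ∈ R, w x + ((l.take j).map fun u => (T.subtree u).card).sum) →
      AcqReach T.graph w (collectAt w R v) →
      AcqReach T.graph w (collectAt w (R ∪ l.toFinset.biUnion T.subtree) v)
  | [], R, _, _, _, _, _, _, hreach => by simpa using hreach
  | u :: l, R, hnd, hch, hw, hv, hdisj, hlegal, hreach => by
    obtain ⟨hul, hnd⟩ := List.nodup_cons.1 hnd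
    have hchu := hch u List.mem_cons_self
    have hdisju := hdisj u List.mem_cons_self
    have hsumu : ∑ x ∈ T.subtree u, w x = (T.subtree u).card := by
      simpa using Finset.sum_const_nat (hw u List.mem_cons_self)
    have hwu : ∀ x ∈ T.subtree u, collectAt w R v x = 1 := by
      intro x hx
      have hxR := Finset.disjoint_right.1 hdisju hx
      rw [collectAt_of_notMem hxR (ne_of_mem_of_not_mem hv hxR).symm]
      exact hw u List.mem_cons_self x hx
    have hmove : AcqMove T.graph (collectAt (collectAt w R v) (T.subtree u) u)
        (collectAt w (R ∪ T.subtree u) v) := by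
      refine acqMove_collectAt_union hdisju hv (self_mem_subtree u) (adj_of_isChild hchu) ?_ ?_
      · rw [hsumu]
        exact Finset.card_pos.2 ⟨u, self_mem_subtree u⟩
      · rw [hsumu]
        exact (hlegal 0 (by simp)).trans_eq (by simp)
    have := reach_collectAt_union_subtrees hgather l (R ∪ T.subtree u) hnd
      (fun u' hu' => hch u' (List.mem_cons_of_mem u hu'))
      (fun u' hu' => hw u' (List.mem_cons_of_mem u hu'))
      (Finset.mem_union_left _ hv)
      (fun u' hu' => Finset.disjoint_union_left.2 ⟨hdisj u' (List.mem_cons_of_mem u hu'),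
        disjoint_subtree_of_isChild hchu (hch u' (List.mem_cons_of_mem u hu'))
          (ne_of_mem_of_not_mem hu' hul).symm⟩)
      (fun j hj => by
        rw [Finset.sum_union hdisju, hsumu]
        exact (hlegal (j + 1) (by simpa)).trans_eq (by simp [add_assoc]))
      (hreach.trans ((hgather u hchu _ hwu).tail hmove))
    rwa [List.toFinset_cons, Finset.biUnion_insert, ← Finset.union_assoc]

lemma reach_collectAt_subtree (hT : T.CutOff) (v : V) (w : V → ℕ)
    (hw : ∀ x ∈ T.subtree v, w x = 1) : AcqReach T.graph w (collectAt w (T.subtree v) v) := by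
  induction hn : (T.subtree v).card using Nat.strong_induction_on generalizing v w with
  | _ n ih =>
  obtain ⟨l, hnd, hl, i', hlt, hge⟩ := hT v
  have hch : ∀ u ∈ l, T.isChild u v := fun u hu => (hl u).1 hu
  have hgather : ∀ u, T.isChild u v → ∀ w' : V → ℕ, (∀ x ∈ T.subtree u, w' x = 1) →
      AcqReach T.graph w' (collectAt w' (T.subtree u) u) := fun u hu w' hw' =>
    ih _ (hn ▸ card_subtree_lt_of_isChild hu) u w' hw' rfl
  have hsizes := le_one_add_sum_take_of_cutoff (s := l.map fun u => (T.subtree u).card)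
    (i' := i') (by simpa using hlt) (by simpa using hge)
  have hreach := reach_collectAt_union_subtrees hgather l {v} hnd hch
    (fun u hu x hx => hw x (subtree_subset_of_isChild (hch u hu) hx))
    (Finset.mem_singleton_self v)
    (fun u hu => Finset.disjoint_singleton_left.2 (notMem_subtree_of_isChild (hch u hu)))
    (fun j hj => by
      rw [Finset.sum_singleton, hw v (self_mem_subtree v), List.map_take,
        ← List.getElem_map (fun u => (T.subtree u).card)]
      exact hsizes j (by simpa))
    (by rw [collectAt_singleton]; exact .refl)
  rwa [← Finset.insert_eq, ← subtree_eq_insert_biUnion hl] at hreach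

end RTree

/-- If a rooted tree `T` has the cut-off property, then the root can acquire all the
weight of `T` via total acquisition moves; in particular `a_t(T) = 1`. -/
theorem stmt1 {V : Type*} [Fintype V] [DecidableEq V] (T : RTree V)
    (h : T.CutOff) :
    (∃ w, AcqReach T.graph (fun _ => 1) w ∧ w T.root = Fintype.card V ∧
      ∀ u, u ≠ T.root → w u = 0) ∧ atNum T.graph = 1 := by
  have hreach := T.reach_collectAt_subtree h T.root (fun _ => 1) (by simp)
  rw [T.subtree_root] at hreach
  have hroot : collectAt (fun _ => 1) Finset.univ T.root T.root = Fintype.card V := by simp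
  have hzero : ∀ u, u ≠ T.root → collectAt (fun _ => 1) Finset.univ T.root u = 0 := by
    intro u hu
    simp [collectAt, hu]
  exact ⟨⟨_, hreach, hroot, hzero⟩,
    atNum_eq_one_of_reach hreach (hroot ▸ Fintype.card_pos_iff.2 ⟨T.root⟩) hzero⟩
end

section
/- Let G be a bipartite graph with parts R and B such that Hall's condition fails for some subset of R of size at least 2, and Hall's condition holds for all singletons. Then there exist S ⊆ R and T ⊆ B with |S| = k ≥ 2, |T| = k−1, N(S) ∩ B = T, and the number of edges between S and T is at least 2(k−1). -/
open Finset

/-- The neighbourhood in `B` of a set `S ⊆ R` in a bipartite graph given by the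
adjacency relation `Adj : R → B → Prop`. -/
def nbhd {R B : Type*} [Fintype B] (Adj : R → B → Prop) [∀ r b, Decidable (Adj r b)]
    (S : Finset R) : Finset B :=
  Finset.univ.filter fun b => ∃ s ∈ S, Adj s b

/-- The number of edges between `S ⊆ R` and `T ⊆ B`. -/
def edgesBetween {R B : Type*} (Adj : R → B → Prop) [∀ r b, Decidable (Adj r b)]
    (S : Finset R) (T : Finset B) : ℕ :=
  ∑ s ∈ S, (T.filter fun b => Adj s b).card

/-- If Hall's condition holds for all singletons of `R` but fails for some subset of `R`
of size at least 2, then there are `S ⊆ R`, `T ⊆ B` with `|S| = k ≥ 2`, `|T| = k - 1`,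
`N(S) ∩ B = T` and `e(S : T) ≥ 2(k - 1)`. -/
theorem stmt8 {R B : Type*} [Fintype R] [Fintype B] [DecidableEq R] [DecidableEq B]
    (Adj : R → B → Prop) [∀ r b, Decidable (Adj r b)]
    (hsingle : ∀ r : R, 1 ≤ (nbhd Adj {r}).card)
    (hfail : ∃ S : Finset R, 2 ≤ S.card ∧ (nbhd Adj S).card < S.card) :
    ∃ (S : Finset R) (T : Finset B), 2 ≤ S.card ∧ T.card = S.card - 1 ∧
      nbhd Adj S = T ∧ 2 * (S.card - 1) ≤ edgesBetween Adj S T := by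
  classical
  obtain ⟨S0, _, hS0⟩ := hfail
  obtain ⟨S, hSmem, hSmin⟩ := Finset.exists_min_image
    (univ.powerset.filter fun X : Finset R => (nbhd Adj X).card < X.card) Finset.card
    ⟨S0, by simp [hS0]⟩
  simp only [mem_filter] at hSmem
  have hP : (nbhd Adj S).card < S.card := hSmem.2
  have hmin : ∀ X : Finset R, (nbhd Adj X).card < X.card → S.card ≤ X.card := by
    intro X hX
    exact hSmin X (by simp [hX])
  have hS2 : 2 ≤ S.card := by
    by_contra h
    push_neg at h
    interval_cases hc : S.card
    · omega
    · obtain ⟨r, hr⟩ := Finset.card_eq_one.mp hc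
      have := hsingle r
      rw [hr] at hP
      omega
  have herase : ∀ s ∈ S, nbhd Adj (S.erase s) = nbhd Adj S := by
    intro s hs
    have hsub : nbhd Adj (S.erase s) ⊆ nbhd Adj S := by
      intro b hb
      simp only [nbhd, mem_filter, mem_univ, true_and] at hb ⊢
      obtain ⟨x, hx, hax⟩ := hb
      exact ⟨x, Finset.mem_of_mem_erase hx, hax⟩
    have hnotP : (S.erase s).card ≤ (nbhd Adj (S.erase s)).card := by
      by_contra h
      push_neg at h
      have := hmin _ h
      rw [Finset.card_erase_of_mem hs] at this
      omega
    have hcard : (nbhd Adj S).card ≤ (nbhd Adj (S.erase s)).card := by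
      rw [Finset.card_erase_of_mem hs] at hnotP
      omega
    exact Finset.eq_of_subset_of_card_le hsub hcard
  obtain ⟨s, hs⟩ : S.Nonempty := Finset.card_pos.mp (by omega)
  have hTcard : (nbhd Adj S).card = S.card - 1 := by
    have h1 : (S.erase s).card ≤ (nbhd Adj (S.erase s)).card := by
      by_contra h
      push_neg at h
      have := hmin _ h
      rw [Finset.card_erase_of_mem hs] at this
      omega
    rw [herase s hs, Finset.card_erase_of_mem hs] at h1
    omega
  have hdeg : ∀ t ∈ nbhd Adj S, 2 ≤ (S.filter fun x => Adj x t).card := by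
    intro t ht
    by_contra h
    push_neg at h
    obtain ⟨s0, hs0, hadj0⟩ : ∃ x ∈ S, Adj x t := by
      simpa [nbhd] using ht
    have ht' : t ∈ nbhd Adj (S.erase s0) := (herase s0 hs0) ▸ ht
    obtain ⟨s1, hs1, hadj1⟩ : ∃ x ∈ S.erase s0, Adj x t := by
      simpa [nbhd] using ht'
    have hne : s1 ≠ s0 := (Finset.mem_erase.mp hs1).1
    have hsub : ({s0, s1} : Finset R) ⊆ S.filter fun x => Adj x t := by
      intro x hx
      simp only [Finset.mem_insert, Finset.mem_singleton] at hx
      rcases hx with rfl | rfl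
      · exact Finset.mem_filter.mpr ⟨hs0, hadj0⟩
      · exact Finset.mem_filter.mpr ⟨Finset.mem_of_mem_erase hs1, hadj1⟩
    have hc2 : ({s0, s1} : Finset R).card = 2 := Finset.card_pair hne.symm
    have := Finset.card_le_card hsub
    omega
  have hswap : edgesBetween Adj S (nbhd Adj S)
      = ∑ t ∈ nbhd Adj S, (S.filter fun x => Adj x t).card := by
    unfold edgesBetween
    simp only [Finset.card_filter]
    rw [Finset.sum_comm]
  refine ⟨S, nbhd Adj S, hS2, hTcard, rfl, ?_⟩
  rw [hswap]
  calc 2 * (S.card - 1) = ∑ _t ∈ nbhd Adj S, 2 := by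
        rw [Finset.sum_const, hTcard, smul_eq_mul, mul_comm]
    _ ≤ ∑ t ∈ nbhd Adj S, (S.filter fun x => Adj x t).card :=
        Finset.sum_le_sum hdeg
end

section
/- Let c be a sequence with c_j* ≤ c_j ≤ c_j*(1+o(1)) and let ρ be defined by ρ_1 = 2 and ρ_{j+1} = σ + 2^{i*(ρ_j)} + (c_j − i*(ρ_j) − σ)·ρ_j, where i*(x) = 0 if x ≤ σ and i*(x) = ⌈log₂(x−σ)⌉ otherwise. Then for all j ≥ 2, ρ_{j+1} = (c_j − log₂ρ_j + O(1))·ρ_j ≤ c_j·ρ_j; in particular ρ_{j+1} ≤ c_j·ρ_j whenever ρ_j = Ω(log n) is sufficiently large relative to σ. -/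
/-!
Write `i = i*(x)` and `L = ⌊log₂ x⌋`, and assume `σ < x` (true for every `ρ_j` with `j ≥ 2`).
Then `2^i` is within a factor `2` of `x - σ`, so `σ + 2^i ≤ 2x`, and the two logarithms are
close: `i ≤ L + 1` since `x - σ ≤ x`, while `x ≤ σ + 2^i` gives `L ≤ i + log₂ σ + 1`.
Hence `ρ_{j+1} = σ + 2^i + (c_j - i - σ)·ρ_j` lies between `(c_j - L - (σ + 1))·ρ_j` and
`(c_j - L + log₂ σ + 3)·ρ_j`. If moreover `x ≥ σ + 2`, then `i ≥ 1`, so `i + σ ≥ 2` and the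
additive term `σ + 2^i ≤ 2x` is absorbed: `ρ_{j+1} ≤ c_j·ρ_j`.
-/

/-- `i*(x) = 0` if `x ≤ σ`, and `⌈log₂(x − σ)⌉` otherwise. -/
def istar (σ : ℕ) (x : ℕ) : ℕ := if x ≤ σ then 0 else Nat.clog 2 (x - σ)

namespace Nat

theorem pow_clog_lt_mul_self {b x : ℕ} (hb : 1 < b) (hx : 1 < x) : b ^ clog b x < b * x := by
  rw [← Nat.succ_pred_eq_of_pos (clog_pos hb hx), pow_succ']
  exact Nat.mul_lt_mul_of_pos_left (pow_pred_clog_lt_self hb hx) (by omega)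

theorem clog_le_log_add_one {b : ℕ} (hb : 1 < b) (x : ℕ) : clog b x ≤ log b x + 1 :=
  clog_le_of_le_pow (lt_pow_succ_log_self hb x).le

theorem log_add_le_max_add_one {b : ℕ} (hb : 1 < b) (m n : ℕ) :
    log b (m + n) ≤ max (log b m) (log b n) + 1 := by
  rcases Nat.eq_zero_or_pos (max m n) with h | h
  · simp_all
  have hsum : m + n ≤ max m n * b := by
    have := Nat.mul_le_mul_left (max m n) hb
    grind
  calc log b (m + n) ≤ log b (max m n * b) := log_mono_right hsum
    _ = log b (max m n) + 1 := log_mul_base hb h.ne'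
    _ = max (log b m) (log b n) + 1 := by rw [log_monotone.map_max]

end Nat

open Nat

section istar

theorem istar_le_log_add_one (σ x : ℕ) : istar σ x ≤ log 2 x + 1 := by
  unfold istar
  split_ifs
  · omega
  · exact (clog_le_log_add_one one_lt_two _).trans (by gcongr; omega)

variable {σ x : ℕ}

theorem istar_of_lt (h : σ < x) : istar σ x = clog 2 (x - σ) := if_neg (by omega)

theorem one_le_istar (h : σ + 2 ≤ x) : 1 ≤ istar σ x := by
  rw [istar_of_lt (by omega)]
  exact clog_pos one_lt_two (by omega)

theorem add_two_pow_istar_le (h : σ < x) : σ + 2 ^ istar σ x ≤ 2 * x := by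
  rw [istar_of_lt h]
  rcases Nat.lt_or_ge (x - σ) 2 with h1 | h2
  · rw [clog_of_right_le_one (by omega)]
    omega
  · have := pow_clog_lt_mul_self one_lt_two h2
    omega

theorem log_le_istar_add (h : σ < x) : log 2 x ≤ istar σ x + log 2 σ + 1 := by
  have hx : x ≤ σ + 2 ^ istar σ x := by
    rw [istar_of_lt h]
    have := le_pow_clog one_lt_two (x - σ)
    omega
  calc log 2 x ≤ log 2 (σ + 2 ^ istar σ x) := log_mono_right hx
    _ ≤ max (log 2 σ) (istar σ x) + 1 := by
        simpa only [log_pow one_lt_two] using log_add_le_max_add_one one_lt_two σ (2 ^ istar σ x)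
    _ ≤ istar σ x + log 2 σ + 1 := by omega

end istar

/-- One step `x = ρ_j ↦ ρ_{j+1}` of the recursion, with `c = c_j`. -/
def rhoStep (σ c x : ℕ) : ℕ := σ + 2 ^ istar σ x + (c - istar σ x - σ) * x

section rhoStep

theorem lt_rhoStep (σ c x : ℕ) : σ < rhoStep σ c x :=
  Nat.lt_of_lt_of_le (Nat.lt_add_of_pos_right (Nat.two_pow_pos _)) (Nat.le_add_right _ _)

theorem sub_log_sub_mul_le_rhoStep (σ c x : ℕ) :
    (c - log 2 x - (σ + 1)) * x ≤ rhoStep σ c x := by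
  have := istar_le_log_add_one σ x
  calc (c - log 2 x - (σ + 1)) * x ≤ (c - istar σ x - σ) * x :=
      Nat.mul_le_mul_right _ (by omega)
    _ ≤ rhoStep σ c x := Nat.le_add_left _ _

variable {σ c x : ℕ}

theorem rhoStep_le_two_add_mul (h : σ < x) : rhoStep σ c x ≤ (c - istar σ x - σ + 2) * x := by
  have := add_two_pow_istar_le h
  unfold rhoStep
  rw [add_mul]
  omega

theorem rhoStep_le_sub_log_add_mul (h : σ < x) :
    rhoStep σ c x ≤ (c - log 2 x + (log 2 σ + 3)) * x := by
  have := log_le_istar_add h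
  exact (rhoStep_le_two_add_mul h).trans (Nat.mul_le_mul_right _ (by omega))

theorem rhoStep_le_mul (hσ : 1 ≤ σ) (hc : 2 ≤ c) (hx : σ + 2 ≤ x) : rhoStep σ c x ≤ c * x := by
  have := one_le_istar hx
  exact (rhoStep_le_two_add_mul (by omega)).trans (Nat.mul_le_mul_right _ (by omega))

end rhoStep

theorem stmt10_general (σ : ℕ) (hσ : 1 ≤ σ) (c ρ : ℕ → ℕ) (hc : ∀ j, 2 ≤ c j)
    (hrec : ∀ j, 1 ≤ j →
      ρ (j + 1) = σ + 2 ^ istar σ (ρ j) + (c j - istar σ (ρ j) - σ) * ρ j) :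
    (∃ C : ℕ, ∀ j, 2 ≤ j →
      (c j - Nat.log 2 (ρ j) - C) * ρ j ≤ ρ (j + 1) ∧
      ρ (j + 1) ≤ (c j - Nat.log 2 (ρ j) + C) * ρ j) ∧
    (∀ j, 2 ≤ j → σ + 2 ≤ ρ j → ρ (j + 1) ≤ c j * ρ j) := by
  have hstep : ∀ j, 1 ≤ j → ρ (j + 1) = rhoStep σ (c j) (ρ j) := hrec
  have hlt : ∀ j, 2 ≤ j → σ < ρ j := by
    intro j hj
    obtain ⟨k, rfl⟩ : ∃ k, j = k + 1 := ⟨j - 1, by omega⟩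
    rw [hstep k (by omega)]
    exact lt_rhoStep _ _ _
  refine ⟨⟨σ + log 2 σ + 3, fun j hj => ⟨?_, ?_⟩⟩, fun j hj hx => ?_⟩ <;>
    rw [hstep j (by omega)]
  · exact (Nat.mul_le_mul_right _ (by omega)).trans (sub_log_sub_mul_le_rhoStep σ (c j) (ρ j))
  · exact (rhoStep_le_sub_log_add_mul (hlt j hj)).trans (Nat.mul_le_mul_right _ (by omega))
  · exact rhoStep_le_mul hσ (hc j) hx

/-- For the recursively defined sequence `ρ₁ = 2`,
`ρ_{j+1} = σ + 2^{i*(ρ_j)} + (c_j − i*(ρ_j) − σ)·ρ_j`, we have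
`ρ_{j+1} = (c_j − log₂ ρ_j + O(1))·ρ_j`; in particular `ρ_{j+1} ≤ c_j·ρ_j` whenever
`ρ_j` is sufficiently large relative to `σ`. -/
theorem stmt10 (σ : ℕ) (hσ : 1 ≤ σ) (c ρ : ℕ → ℕ) (hc : ∀ j, 2 ≤ c j)
    (hρ1 : ρ 1 = 2)
    (hrec : ∀ j, 1 ≤ j →
      ρ (j + 1) = σ + 2 ^ istar σ (ρ j) + (c j - istar σ (ρ j) - σ) * ρ j) :
    (∃ C : ℕ, ∀ j, 2 ≤ j →
      (c j - Nat.log 2 (ρ j) - C) * ρ j ≤ ρ (j + 1) ∧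
      ρ (j + 1) ≤ (c j - Nat.log 2 (ρ j) + C) * ρ j) ∧
    (∀ j, 2 ≤ j → σ + 2 ≤ ρ j → ρ (j + 1) ≤ c j * ρ j) :=
  stmt10_general σ hσ c ρ hc hrec
end

section
/- Define sequences ρ_j and b_j by ρ_1 = 2, b_1 = 1, ρ_{j+1} = σ + 2^{i*(ρ_j)} + (c_j − i*(ρ_j) − σ)·ρ_j, and b_{j+1} = (c_j − i*(ρ_j) − σ)·b_j. Suppose that c_j − log₂ ρ_j = Ω(log n) for all 1 ≤ j ≤ m and m = o(log n). Then ρ_j / b_j = 2·(1 + O(j/log n)) for all j ≤ m; hence ρ_j/b_j → 2 and b_j/(ρ_j − b_j) → 1 as n → ∞, uniformly for j ≤ m. -/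
open Filter

lemma istar_le_clog (σ x : ℕ) : istar σ x ≤ Nat.clog 2 x := by
  unfold istar
  split
  · exact Nat.zero_le _
  · exact Nat.clog_mono_right 2 (Nat.sub_le x σ)

lemma pow_istar_le (σ x : ℕ) (hx : 2 ≤ x) : 2 ^ istar σ x ≤ 2 * x := by
  unfold istar
  split
  · omega
  · rename_i h
    push_neg at h
    rcases Nat.lt_or_ge (x - σ) 2 with h2 | h2
    · interval_cases h3 : (x - σ) <;> simp [Nat.clog_one_right] <;> omega
    · have hpos : 0 < Nat.clog 2 (x - σ) := Nat.clog_pos one_lt_two h2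
      have hlt : 2 ^ (Nat.clog 2 (x - σ) - 1) < x - σ := Nat.pow_pred_clog_lt_self one_lt_two h2
      have : 2 ^ Nat.clog 2 (x - σ) = 2 * 2 ^ (Nat.clog 2 (x - σ) - 1) := by
        rw [← pow_succ']
        congr 1
        omega
      omega

lemma clog_le_logb (x : ℕ) (hx : 1 ≤ x) : (Nat.clog 2 x : ℝ) ≤ Real.logb 2 x + 1 := by
  rcases Nat.lt_or_ge x 2 with h2 | h2
  · have : x = 1 := by omega
    subst this
    simp [Nat.clog_one_right]
  · have hpos : 0 < Nat.clog 2 x := Nat.clog_pos one_lt_two h2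
    have hlt : 2 ^ (Nat.clog 2 x - 1) < x := Nat.pow_pred_clog_lt_self one_lt_two h2
    have hltR : ((2:ℝ) ^ (Nat.clog 2 x - 1)) < (x:ℝ) := by exact_mod_cast hlt
    have h1 : Real.logb 2 ((2:ℝ) ^ (Nat.clog 2 x - 1)) < Real.logb 2 x :=
      Real.logb_lt_logb one_lt_two (by positivity) hltR
    rw [Real.logb_pow, Real.logb_self_eq_one one_lt_two, mul_one] at h1
    have hc : ((Nat.clog 2 x - 1 : ℕ) : ℝ) = (Nat.clog 2 x : ℝ) - 1 := by
      rw [Nat.cast_sub hpos]; simp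
    rw [hc] at h1
    linarith

set_option maxHeartbeats 1000000 in
lemma key (σ : ℕ) (hσ : 1 ≤ σ) (c ρ b : ℕ → ℕ) (K L : ℝ) (hK : 0 < K) (hL : 1 ≤ L)
    (hρ1 : ρ 1 = 2) (hb1 : b 1 = 1)
    (hrecρ : ∀ j, 1 ≤ j → ρ (j+1) = σ + 2 ^ istar σ (ρ j) + (c j - istar σ (ρ j) - σ) * ρ j)
    (hrecb : ∀ j, 1 ≤ j → b (j+1) = (c j - istar σ (ρ j) - σ) * b j)
    (M : ℕ)
    (hgap : ∀ j, 1 ≤ j → j ≤ M → K * L ≤ (c j : ℝ) - Real.logb 2 (ρ j))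
    (hKL : 2 * ((σ:ℝ) + 2) ≤ K * L)
    (hM : (2 * ((σ:ℝ) + 6) / K) * M ≤ L) :
    ∀ j, 1 ≤ j → j ≤ M →
      1 ≤ b j ∧ 2 * b j ≤ ρ j ∧
      (ρ j : ℝ) ≤ (2 + (2 * ((σ:ℝ) + 6) / K) * ((j:ℝ) - 1) / L) * (b j : ℝ) := by
  have hL0 : (0:ℝ) < L := by linarith
  set D : ℝ := 2 * ((σ:ℝ) + 6) / K with hDdef
  have hD : 0 < D := by positivity
  intro j
  induction j with
  | zero => intro h; omega
  | succ j ih =>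
    intro _ hjM
    rcases Nat.eq_zero_or_pos j with rfl | hj1
    · refine ⟨by simp [hb1], by simp [hρ1, hb1], ?_⟩
      simp [hρ1, hb1]
    · have hjM' : j ≤ M := by omega
      obtain ⟨hb, hbρ, hub⟩ := ih hj1 hjM'
      set q : ℕ := c j - istar σ (ρ j) - σ with hqdef
      have hB1 : (1:ℝ) ≤ (b j : ℝ) := by exact_mod_cast hb
      have hB0 : (0:ℝ) < (b j : ℝ) := by linarith
      have hρ2 : 2 ≤ ρ j := by
        calc 2 = 2 * 1 := by ring
        _ ≤ 2 * b j := by omega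
        _ ≤ ρ j := hbρ
      -- istar bound
      have histar : ((istar σ (ρ j) : ℕ) : ℝ) ≤ Real.logb 2 (ρ j) + 1 := by
        calc ((istar σ (ρ j) : ℕ) : ℝ) ≤ (Nat.clog 2 (ρ j) : ℝ) := by
              exact_mod_cast istar_le_clog σ (ρ j)
        _ ≤ Real.logb 2 (ρ j) + 1 := clog_le_logb _ (by omega)
      have hgapj := hgap j hj1 hjM'
      -- c j is big
      have hcbig : ((istar σ (ρ j) : ℕ) : ℝ) + (σ:ℝ) + K * L / 2 ≤ (c j : ℝ) := by
        nlinarith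
      have hσ2 : (σ:ℝ) + 2 ≤ K * L / 2 := by linarith
      have hcnat : istar σ (ρ j) + σ + 1 ≤ c j := by
        have : ((istar σ (ρ j) : ℕ) : ℝ) + (σ:ℝ) + 1 ≤ (c j : ℝ) := by nlinarith
        exact_mod_cast this
      have hqcast : (q : ℝ) = (c j : ℝ) - ((istar σ (ρ j) : ℕ) : ℝ) - (σ:ℝ) := by
        rw [hqdef, Nat.cast_sub (by omega), Nat.cast_sub (by omega)]
      have hQ : K * L / 2 ≤ (q : ℝ) := by rw [hqcast]; linarith
      have hq1 : 1 ≤ q := by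
        have : (1:ℝ) ≤ (q:ℝ) := by linarith
        exact_mod_cast this
      -- the three conclusions
      have hbS : b (j+1) = q * b j := hrecb j hj1
      have hρS : ρ (j+1) = σ + 2 ^ istar σ (ρ j) + q * ρ j := hrecρ j hj1
      refine ⟨?_, ?_, ?_⟩
      · rw [hbS]; exact Nat.one_le_iff_ne_zero.2 (by positivity)
      · rw [hbS, hρS]
        calc 2 * (q * b j) = q * (2 * b j) := by ring
        _ ≤ q * ρ j := Nat.mul_le_mul_left q hbρ
        _ ≤ σ + 2 ^ istar σ (ρ j) + q * ρ j := Nat.le_add_left _ _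
      · -- real upper bound
        have hJub : D * ((j:ℝ) - 1) / L ≤ 1 := by
          have hjMr : (j:ℝ) - 1 ≤ (M:ℝ) := by
            have : (j:ℝ) ≤ (M:ℝ) := by exact_mod_cast hjM'
            linarith
          rw [div_le_one hL0]
          calc D * ((j:ℝ) - 1) ≤ D * (M:ℝ) := mul_le_mul_of_nonneg_left hjMr hD.le
          _ ≤ L := hM
        have hR3 : (ρ j : ℝ) ≤ 3 * (b j : ℝ) := by
          calc (ρ j : ℝ) ≤ (2 + D * ((j:ℝ) - 1) / L) * (b j : ℝ) := hub
          _ ≤ 3 * (b j : ℝ) := by nlinarith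
        have hpow : ((2 ^ istar σ (ρ j) : ℕ) : ℝ) ≤ 2 * (ρ j : ℝ) := by
          exact_mod_cast pow_istar_le σ (ρ j) hρ2
        have hσB : ((σ:ℝ) + 6) * (b j : ℝ) ≥ (σ:ℝ) + ((2 ^ istar σ (ρ j) : ℕ) : ℝ) := by
          have h1 : (σ:ℝ) ≤ (σ:ℝ) * (b j : ℝ) :=
            le_mul_of_one_le_right (by positivity) hB1
          linarith [hpow, hR3, h1]
        have hkey : ((σ:ℝ) + 6) * (b j : ℝ) ≤ (q:ℝ) * (b j : ℝ) * (D / L) := by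
          have h1 : (K * L / 2) * ((b j : ℝ) * (D / L)) ≤ (q:ℝ) * ((b j : ℝ) * (D / L)) :=
            mul_le_mul_of_nonneg_right hQ (by positivity)
          have h2 : (K * L / 2) * ((b j : ℝ) * (D / L)) = ((σ:ℝ) + 6) * (b j : ℝ) := by
            rw [hDdef]; field_simp
          linarith [h1, h2]
        have hexp : (2 + D * (((j+1:ℕ):ℝ) - 1) / L) * ((q:ℝ) * (b j : ℝ))
            = (q:ℝ) * ((2 + D * ((j:ℝ) - 1) / L) * (b j : ℝ)) + (q:ℝ) * (b j : ℝ) * (D / L) := by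
          push_cast
          field_simp
          ring
        have hQ0 : (0:ℝ) ≤ (q:ℝ) := by positivity
        calc (ρ (j+1) : ℝ) = (σ:ℝ) + ((2 ^ istar σ (ρ j) : ℕ) : ℝ) + (q:ℝ) * (ρ j : ℝ) := by
              rw [hρS]; push_cast; ring
        _ ≤ ((σ:ℝ) + 6) * (b j : ℝ) + (q:ℝ) * ((2 + D * ((j:ℝ) - 1) / L) * (b j : ℝ)) := by
              have := mul_le_mul_of_nonneg_left hub hQ0
              linarith
        _ ≤ (2 + D * (((j+1:ℕ):ℝ) - 1) / L) * ((q:ℝ) * (b j : ℝ)) := by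
              rw [hexp]; linarith
        _ = (2 + D * (((j+1:ℕ):ℝ) - 1) / L) * ((b (j+1) : ℝ)) := by
              rw [hbS]; push_cast; ring

set_option maxHeartbeats 1000000 in

/-- For the recursively defined sequences `ρ₁ = 2`, `b₁ = 1`,
`ρ_{j+1} = σ + 2^{i*(ρ_j)} + (c_j − i*(ρ_j) − σ)·ρ_j`,
`b_{j+1} = (c_j − i*(ρ_j) − σ)·b_j` (all depending on `n`), if
`c_j − log₂ ρ_j = Ω(log n)` uniformly for `1 ≤ j ≤ m(n)` and `m(n) = o(log n)`, then
`ρ_j/b_j = 2·(1 + O(j/log n))`; hence `ρ_j/b_j → 2` and `b_j/(ρ_j − b_j) → 1`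
uniformly for `j ≤ m(n)` as `n → ∞`. -/
theorem stmt11 (σ : ℕ) (hσ : 1 ≤ σ) (c ρ b : ℕ → ℕ → ℕ) (m : ℕ → ℕ)
    (hρ1 : ∀ n, ρ n 1 = 2) (hb1 : ∀ n, b n 1 = 1)
    (hrecρ : ∀ n j, 1 ≤ j →
      ρ n (j + 1) = σ + 2 ^ istar σ (ρ n j) + (c n j - istar σ (ρ n j) - σ) * ρ n j)
    (hrecb : ∀ n j, 1 ≤ j →
      b n (j + 1) = (c n j - istar σ (ρ n j) - σ) * b n j)
    (hgap : ∃ K : ℝ, 0 < K ∧ ∀ᶠ n : ℕ in atTop, ∀ j, 1 ≤ j → j ≤ m n →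
      K * Real.log n ≤ (c n j : ℝ) - Real.logb 2 (ρ n j))
    (hm : Tendsto (fun n : ℕ => (m n : ℝ) / Real.log n) atTop (nhds 0)) :
    (∃ C : ℝ, 0 < C ∧ ∀ᶠ n : ℕ in atTop, ∀ j, 1 ≤ j → j ≤ m n →
      |(ρ n j : ℝ) / (b n j : ℝ) - 2| ≤ C * j / Real.log n) ∧
    (∀ ε : ℝ, 0 < ε → ∀ᶠ n : ℕ in atTop, ∀ j, 1 ≤ j → j ≤ m n →
      |(ρ n j : ℝ) / (b n j : ℝ) - 2| < ε ∧
      |(b n j : ℝ) / ((ρ n j : ℝ) - (b n j : ℝ)) - 1| < ε) := by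
  obtain ⟨K, hK, hgapE⟩ := hgap
  set D : ℝ := 2 * ((σ:ℝ) + 6) / K with hDdef
  have hD : 0 < D := by positivity
  have hlog : Tendsto (fun n : ℕ => Real.log n) atTop atTop :=
    Real.tendsto_log_atTop.comp tendsto_natCast_atTop_atTop
  have hE1 : ∀ᶠ n : ℕ in atTop, 1 ≤ Real.log n ∧ 2 * ((σ:ℝ) + 2) ≤ K * Real.log n := by
    filter_upwards [hlog.eventually_ge_atTop 1,
      hlog.eventually_ge_atTop (2 * ((σ:ℝ) + 2) / K)] with n h1 h2
    refine ⟨h1, ?_⟩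
    rw [div_le_iff₀ hK] at h2
    linarith
  have hE2 : ∀ᶠ n : ℕ in atTop, D * (m n : ℝ) ≤ Real.log n := by
    filter_upwards [hlog.eventually_ge_atTop 1,
      hm.eventually (eventually_le_nhds (show (0:ℝ) < 1 / D by positivity))] with n h1 h2
    have hL0 : (0:ℝ) < Real.log n := by linarith
    rw [div_le_div_iff₀ hL0 hD] at h2
    linarith
  have hmain : ∀ᶠ n : ℕ in atTop, ∀ j, 1 ≤ j → j ≤ m n →
      1 ≤ b n j ∧ 2 * b n j ≤ ρ n j ∧
      (ρ n j : ℝ) ≤ (2 + D * ((j:ℝ) - 1) / Real.log n) * (b n j : ℝ) := by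
    filter_upwards [hgapE, hE1, hE2] with n hg hn1 h3
    exact key σ hσ (c n) (ρ n) (b n) K (Real.log n) hK hn1.1 (hρ1 n) (hb1 n)
      (hrecρ n) (hrecb n) (m n) hg hn1.2 h3
  constructor
  · refine ⟨D, hD, ?_⟩
    filter_upwards [hmain, hE1] with n hn hn1
    intro j hj hjm
    obtain ⟨hb', hbρ, hub⟩ := hn j hj hjm
    have hL0 : (0:ℝ) < Real.log n := by linarith [hn1.1]
    have hB0 : (0:ℝ) < (b n j : ℝ) := by exact_mod_cast Nat.lt_of_lt_of_le Nat.zero_lt_one hb'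
    have hlow : (2:ℝ) ≤ (ρ n j : ℝ) / (b n j : ℝ) := by
      rw [le_div_iff₀ hB0]
      exact_mod_cast hbρ
    have hhigh : (ρ n j : ℝ) / (b n j : ℝ) ≤ 2 + D * ((j:ℝ) - 1) / Real.log n :=
      (div_le_iff₀ hB0).2 hub
    rw [abs_of_nonneg (by linarith)]
    have h5 : D * ((j:ℝ) - 1) / Real.log n ≤ D * (j:ℝ) / Real.log n :=
      div_le_div_of_nonneg_right (by nlinarith) hL0.le
    linarith
  · intro ε hε
    filter_upwards [hmain, hE1,
      hm.eventually (eventually_lt_nhds (show (0:ℝ) < ε / D by positivity))] with n hn hn1 hsm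
    intro j hj hjm
    obtain ⟨hb', hbρ, hub⟩ := hn j hj hjm
    have hL0 : (0:ℝ) < Real.log n := by linarith [hn1.1]
    have hB0 : (0:ℝ) < (b n j : ℝ) := by exact_mod_cast Nat.lt_of_lt_of_le Nat.zero_lt_one hb'
    have hB1 : (1:ℝ) ≤ (b n j : ℝ) := by exact_mod_cast hb'
    have hlowN : (2:ℝ) * (b n j : ℝ) ≤ (ρ n j : ℝ) := by exact_mod_cast hbρ
    -- the delta bound is < ε
    have hδ : D * ((j:ℝ) - 1) / Real.log n < ε := by
      have h6 : (m n : ℝ) / Real.log n < ε / D := hsm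
      rw [div_lt_div_iff₀ hL0 hD] at h6
      have hjmr : (j:ℝ) ≤ (m n : ℝ) := by exact_mod_cast hjm
      have h7 : D * ((j:ℝ) - 1) ≤ D * (m n : ℝ) := by nlinarith
      rw [div_lt_iff₀ hL0]
      nlinarith
    have hfirst : |(ρ n j : ℝ) / (b n j : ℝ) - 2| < ε := by
      have hlow : (2:ℝ) ≤ (ρ n j : ℝ) / (b n j : ℝ) := by rw [le_div_iff₀ hB0]; linarith
      have hhigh : (ρ n j : ℝ) / (b n j : ℝ) ≤ 2 + D * ((j:ℝ) - 1) / Real.log n :=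
        (div_le_iff₀ hB0).2 hub
      rw [abs_of_nonneg (by linarith)]
      linarith
    refine ⟨hfirst, ?_⟩
    have hRB : (0:ℝ) < (ρ n j : ℝ) - (b n j : ℝ) := by linarith
    have hx1 : (b n j : ℝ) / ((ρ n j : ℝ) - (b n j : ℝ)) ≤ 1 := by
      rw [div_le_one hRB]; linarith
    have hx2 : 1 - ε < (b n j : ℝ) / ((ρ n j : ℝ) - (b n j : ℝ)) := by
      rw [lt_div_iff₀ hRB]
      have h9 : (ρ n j : ℝ) - 2 * (b n j : ℝ) ≤ (D * ((j:ℝ) - 1) / Real.log n) * (b n j : ℝ) := by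
        nlinarith [hub]
      have h10 : (D * ((j:ℝ) - 1) / Real.log n) * (b n j : ℝ) < ε * (b n j : ℝ) :=
        mul_lt_mul_of_pos_right hδ hB0
      have h11 : ε * (b n j : ℝ) ≤ ε * ((ρ n j : ℝ) - (b n j : ℝ)) :=
        mul_le_mul_of_nonneg_left (by linarith) hε.le
      nlinarith
    have hx0 : (0:ℝ) < (b n j : ℝ) / ((ρ n j : ℝ) - (b n j : ℝ)) := by positivity
    rw [abs_of_nonpos (by linarith)]
    linarith
end

section
/- In a graph G with maximum degree at most 4 log n and containing no path on γ vertices all of whose vertices have degree at least c' log n (where c' < c''), no vertex can acquire weight n^{c'' log 2} via total acquisition moves, provided γ is a sufficiently large constant (depending on c', c''). Consequently, a_t(G) ≥ n^{1 − c'' log 2}. -/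
set_option linter.unusedSectionVars false
set_option linter.unusedVariables false
set_option maxHeartbeats 1000000

open Filter

section Aux
variable {V : Type*} [Fintype V] [DecidableEq V] {G : SimpleGraph V} [DecidableRel G.Adj]

/-- zero weight is absorbing under one move -/
lemma acqMove_zero {w w' : V → ℕ} (h : AcqMove G w w') {x : V} (hx : w x = 0) : w' x = 0 := by
  obtain ⟨u, v, hadj, hu, huv, rfl⟩ := h
  have hvx : v ≠ x := by rintro rfl; omega
  by_cases hux : u = x
  · subst hux
    simp [Function.update_of_ne (Ne.symm hvx)]
  · simp [Function.update_of_ne (Ne.symm hvx), Function.update_of_ne (fun h => hux h.symm), hx]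

lemma acqReach_zero {w w' : V → ℕ} (h : Relation.ReflTransGen (AcqMove G) w w') {x : V}
    (hx : w x = 0) : w' x = 0 := by
  induction h with
  | refl => exact hx
  | tail _ h2 ih => exact acqMove_zero h2 ih

/-- number of zero-weight neighbors -/
def zn (G : SimpleGraph V) [DecidableRel G.Adj] (w : V → ℕ) (v : V) : ℕ :=
  ((G.neighborFinset v).filter (fun u => w u = 0)).card

lemma zn_le_degree (w : V → ℕ) (v : V) : zn G w v ≤ G.degree v :=
  le_trans (Finset.card_filter_le _ _) (le_of_eq (G.card_neighborFinset_eq_degree v))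

lemma zn_mono {w w' : V → ℕ} (h : AcqMove G w w') (v : V) : zn G w v ≤ zn G w' v := by
  apply Finset.card_le_card
  intro x hx
  simp only [Finset.mem_filter] at hx ⊢
  exact ⟨hx.1, acqMove_zero h hx.2⟩

lemma zn_succ {w w' : V → ℕ} {u v : V} (hadj : G.Adj u v) (hu : 0 < w u) (hu' : w' u = 0)
    (hmono : ∀ x, w x = 0 → w' x = 0) : zn G w v + 1 ≤ zn G w' v := by
  have hsub : insert u ((G.neighborFinset v).filter (fun x => w x = 0)) ⊆
      ((G.neighborFinset v).filter (fun x => w' x = 0)) := by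
    intro x hx
    rcases Finset.mem_insert.mp hx with rfl | hx
    · exact Finset.mem_filter.mpr ⟨(G.mem_neighborFinset v x).mpr hadj.symm, hu'⟩
    · rcases Finset.mem_filter.mp hx with ⟨h1, h2⟩
      exact Finset.mem_filter.mpr ⟨h1, hmono _ h2⟩
  have hnot : u ∉ (G.neighborFinset v).filter (fun x => w x = 0) := by
    simp only [Finset.mem_filter]
    rintro ⟨-, h⟩; omega
  calc zn G w v + 1 = (insert u ((G.neighborFinset v).filter (fun x => w x = 0))).card := by
        rw [Finset.card_insert_of_notMem hnot]; rfl
    _ ≤ _ := Finset.card_le_card hsub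

/-- Lemma B: weight is at most 2 ^ (number of zero neighbors). -/
lemma weight_le_two_pow_zn {w : V → ℕ} (h : AcqReach G (fun _ => 1) w) (v : V) :
    w v ≤ 2 ^ zn G w v := by
  induction h with
  | refl => simpa using Nat.one_le_two_pow
  | @tail w₁ w₂ h1 h2 ih =>
    obtain ⟨u, x, hadj, hu, hux, rfl⟩ := h2
    set w₂ := Function.update (Function.update w₁ u 0) x (w₁ x + w₁ u) with hw₂
    have hmove : AcqMove G w₁ w₂ := ⟨u, x, hadj, hu, hux, rfl⟩
    by_cases hvu : v = u
    · subst hvu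
      have hvx : v ≠ x := hadj.ne
      have : w₂ v = 0 := by rw [hw₂, Function.update_of_ne hvx]; simp
      simp [this]
    · by_cases hvx : v = x
      · subst hvx
        have hzn : zn G w₁ v + 1 ≤ zn G w₂ v :=
          zn_succ hadj hu (by rw [hw₂, Function.update_of_ne hadj.ne]; simp)
            (fun y hy => acqMove_zero hmove hy)
        have hval : w₂ v = w₁ v + w₁ u := by rw [hw₂]; simp
        have h2' : w₁ v + w₁ u ≤ 2 ^ (zn G w₁ v + 1) := by
          calc w₁ v + w₁ u ≤ 2 * w₁ v := by omega
            _ ≤ 2 * 2 ^ zn G w₁ v := by omega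
            _ = 2 ^ (zn G w₁ v + 1) := by ring
        rw [hval]
        exact le_trans h2' (Nat.pow_le_pow_right (by norm_num) hzn)
      · have heq : w₂ v = w₁ v := by
          rw [hw₂, Function.update_of_ne hvx, Function.update_of_ne hvu]
        rw [heq]
        exact le_trans ih (Nat.pow_le_pow_right (by norm_num) (zn_mono hmove v))

/-- Lemma C: a big donation exists. -/
lemma donation {w : V → ℕ} (h : AcqReach G (fun _ => 1) w) (v : V) (hv : 2 ≤ w v) :
    ∃ (u : V) (w₁ : V → ℕ), G.Adj u v ∧ AcqReach G (fun _ => 1) w₁ ∧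
      Relation.ReflTransGen (AcqMove G) w₁ w ∧ 0 < w₁ u ∧ w u = 0 ∧
      w v ≤ 1 + zn G w v * w₁ u := by
  induction h with
  | refl => simp at hv
  | @tail w₁ w₂ h1 h2 ih =>
    obtain ⟨u, x, hadj, hu, hux, rfl⟩ := h2
    set w₂ := Function.update (Function.update w₁ u 0) x (w₁ x + w₁ u) with hw₂
    have hmove : AcqMove G w₁ w₂ := ⟨u, x, hadj, hu, hux, rfl⟩
    by_cases hvu : v = u
    · subst hvu
      have hvx : v ≠ x := hadj.ne
      have : w₂ v = 0 := by rw [hw₂, Function.update_of_ne hvx]; simp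
      omega
    · by_cases hvx : v = x
      · subst hvx
        have hval : w₂ v = w₁ v + w₁ u := by rw [hw₂]; simp
        have hzu : w₂ u = 0 := by rw [hw₂, Function.update_of_ne hadj.ne]; simp
        have hzn : zn G w₁ v + 1 ≤ zn G w₂ v :=
          zn_succ hadj hu hzu (fun y hy => acqMove_zero hmove hy)
        by_cases hw1v : 2 ≤ w₁ v
        · obtain ⟨u', w₁', hadj', hreach', hsteps', hpos', hzero', hbound'⟩ := ih hw1v
          by_cases hcmp : w₁' u' ≤ w₁ u
          · refine ⟨u, w₁, hadj, h1, Relation.ReflTransGen.single hmove, hu, hzu, ?_⟩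
            have hz1 : zn G w₁ v ≤ zn G w₂ v := zn_mono hmove v
            have : w₁ v ≤ 1 + zn G w₁ v * w₁ u :=
              le_trans hbound' (by nlinarith)
            rw [hval]
            nlinarith
          · push_neg at hcmp
            refine ⟨u', w₁', hadj', hreach', hsteps'.tail hmove, hpos', ?_, ?_⟩
            · exact acqMove_zero hmove hzero'
            · rw [hval]
              have h3 : w₁ v ≤ 1 + zn G w₁ v * w₁' u' := hbound'
              have h4 : w₁ u ≤ w₁' u' := le_of_lt hcmp
              nlinarith
        · have hv1 : w₁ v = 1 := by omega
          refine ⟨u, w₁, hadj, h1, Relation.ReflTransGen.single hmove, hu, hzu, ?_⟩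
          rw [hval, hv1]
          nlinarith
      · have heq : w₂ v = w₁ v := by
          rw [hw₂, Function.update_of_ne hvx, Function.update_of_ne hvu]
        rw [heq] at hv ⊢
        obtain ⟨u', w₁', hadj', hreach', hsteps', hpos', hzero', hbound'⟩ := ih hv
        refine ⟨u', w₁', hadj', hreach', hsteps'.tail hmove, hpos',
          acqMove_zero hmove hzero', ?_⟩
        have hz1 : zn G w₁ v ≤ zn G w₂ v := zn_mono hmove v
        nlinarith

/-- Chain lemma: build a path of high-degree vertices. -/
lemma chain (a b : ℕ) (hb1 : 1 ≤ b) (hb : ∀ x : V, 2 * G.degree x ≤ 2 ^ b) :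
    ∀ k : ℕ, ∀ w : V → ℕ, AcqReach G (fun _ => 1) w → ∀ v : V,
      2 ^ (a + k * b) ≤ w v →
      ∃ (u : V) (p : G.Walk v u), p.IsPath ∧ p.length = k ∧
        (∀ x ∈ p.support, a ≤ G.degree x) ∧ (∀ x ∈ p.support.tail, w x = 0) := by
  intro k
  induction k with
  | zero =>
    intro w hreach v hv
    refine ⟨v, SimpleGraph.Walk.nil, SimpleGraph.Walk.IsPath.nil, rfl, ?_, by simp⟩
    intro x hx
    simp only [SimpleGraph.Walk.support_nil, List.mem_singleton] at hx
    subst hx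
    have h1 : 2 ^ a ≤ 2 ^ G.degree x := by
      calc 2 ^ a ≤ w x := by simpa using hv
        _ ≤ 2 ^ zn G w x := weight_le_two_pow_zn hreach x
        _ ≤ 2 ^ G.degree x := Nat.pow_le_pow_right (by norm_num) (zn_le_degree w x)
    exact (Nat.pow_le_pow_iff_right (by norm_num)).mp h1
  | succ k ih =>
    intro w hreach v hv
    have hwv2 : 2 ≤ w v := by
      calc 2 = 2 ^ 1 := rfl
        _ ≤ 2 ^ (a + (k+1) * b) := Nat.pow_le_pow_right (by norm_num) (by nlinarith)
        _ ≤ w v := hv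
    obtain ⟨u, w₁, hadj, hreach₁, hsteps, hpos, hzero, hbound⟩ := donation hreach v hwv2
    have hdegv : 1 ≤ G.degree v := by
      rw [← G.card_neighborFinset_eq_degree]
      exact Finset.card_pos.mpr ⟨u, (G.mem_neighborFinset v u).mpr hadj.symm⟩
    have hkey : w v ≤ 2 ^ b * w₁ u := by
      have h1 : zn G w v ≤ G.degree v := zn_le_degree w v
      have h2 : 1 ≤ G.degree v * w₁ u := Nat.one_le_iff_ne_zero.mpr (by positivity)
      calc w v ≤ 2 * G.degree v * w₁ u := by nlinarith
        _ ≤ 2 ^ b * w₁ u := Nat.mul_le_mul_right _ (hb v)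
    have hu : 2 ^ (a + k * b) ≤ w₁ u := by
      have h6 : 2 ^ b * 2 ^ (a + k * b) ≤ 2 ^ b * w₁ u := by
        calc 2 ^ b * 2 ^ (a + k * b) = 2 ^ (a + (k+1) * b) := by ring
          _ ≤ w v := hv
          _ ≤ 2 ^ b * w₁ u := hkey
      exact Nat.le_of_mul_le_mul_left h6 (by positivity)
    obtain ⟨u', p', hpath', hlen', hdeg', hzero'⟩ := ih w₁ hreach₁ u hu
    have hzw : ∀ x ∈ p'.support, w x = 0 := by
      intro x hx
      rw [p'.support_eq_cons] at hx
      rcases List.mem_cons.mp hx with rfl | hx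
      · exact hzero
      · exact acqReach_zero hsteps (hzero' x hx)
    have hvnot : v ∉ p'.support := by
      intro hmem
      have := hzw v hmem
      omega
    refine ⟨u', SimpleGraph.Walk.cons hadj.symm p', hpath'.cons hvnot, by simp [hlen'], ?_, ?_⟩
    · intro x hx
      rw [SimpleGraph.Walk.support_cons] at hx
      rcases List.mem_cons.mp hx with rfl | hx
      · have h1 : 2 ^ a ≤ 2 ^ G.degree x := by
          calc 2 ^ a ≤ 2 ^ (a + (k+1)*b) := Nat.pow_le_pow_right (by norm_num) (by omega)
            _ ≤ w x := hv
            _ ≤ 2 ^ zn G w x := weight_le_two_pow_zn hreach x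
            _ ≤ 2 ^ G.degree x := Nat.pow_le_pow_right (by norm_num) (zn_le_degree w x)
        exact (Nat.pow_le_pow_iff_right (by norm_num)).mp h1
      · exact hdeg' x hx
    · intro x hx
      rw [SimpleGraph.Walk.support_cons] at hx
      exact hzw x hx

/-- total weight is preserved -/
lemma sum_weight {w : V → ℕ} (h : AcqReach G (fun _ => 1) w) :
    ∑ x, w x = Fintype.card V := by
  induction h with
  | refl => simp
  | @tail w₁ w₂ h1 h2 ih =>
    obtain ⟨u, v, hadj, hu, huv, rfl⟩ := h2
    rw [← ih]
    have huv' : u ≠ v := hadj.ne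
    rw [Finset.sum_update_of_mem (Finset.mem_univ v)]
    rw [Finset.sum_update_of_mem (by simp [huv'] : u ∈ Finset.univ \ {v})]
    have hv : ∑ x : V, w₁ x = w₁ v + ∑ x ∈ Finset.univ \ {v}, w₁ x := by
      rw [Finset.sum_eq_add_sum_sdiff_singleton_of_mem (Finset.mem_univ v)]
    have hu2 : ∑ x ∈ Finset.univ \ {v}, w₁ x
        = w₁ u + ∑ x ∈ (Finset.univ \ {v}) \ {u}, w₁ x := by
      rw [Finset.sum_eq_add_sum_sdiff_singleton_of_mem (by simp [huv'] : u ∈ Finset.univ \ {v})]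
    omega

lemma residualCard_eq (w : V → ℕ) :
    residualCard w = (Finset.univ.filter (fun v => 0 < w v)).card := by
  rw [residualCard, Nat.card_eq_fintype_card, Fintype.card_subtype]

lemma residual_decrease {w w' : V → ℕ} (h : AcqMove G w w') :
    residualCard w' < residualCard w := by
  rw [residualCard_eq, residualCard_eq]
  obtain ⟨u, v, hadj, hu, huv, rfl⟩ := h
  apply Finset.card_lt_card
  constructor
  · intro x hx
    simp only [Finset.mem_filter, Finset.mem_univ, true_and] at hx ⊢
    by_contra hzero
    have h7 : w x = 0 := by omega
    have := acqMove_zero (⟨u, v, hadj, hu, huv, rfl⟩ : AcqMove G w _) h7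
    omega
  · intro hsub
    have hmem : u ∈ Finset.univ.filter (fun x => 0 < w x) := by simp [hu]
    have := hsub hmem
    simp only [Finset.mem_filter, Finset.mem_univ, true_and] at this
    rw [Function.update_of_ne hadj.ne, Function.update_self] at this
    omega

lemma exists_maximal :
    ∃ w, AcqReach G (fun _ => 1) w ∧ AcqMaximal G w := by
  set S : Set ℕ := {k | ∃ w, AcqReach G (fun _ => 1) w ∧ residualCard w = k} with hS
  have hne : S.Nonempty := ⟨residualCard (fun _ => 1), (fun _ => 1), Relation.ReflTransGen.refl, rfl⟩
  obtain ⟨w, hreach, hres⟩ := Nat.sInf_mem hne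
  refine ⟨w, hreach, ?_⟩
  rintro ⟨w', hmove⟩
  have h1 : residualCard w' ∈ S := ⟨w', hreach.tail hmove, rfl⟩
  have h2 := Nat.sInf_le h1
  have h3 := residual_decrease hmove
  omega

end Aux

lemma event_aux (c' c'' : ℝ) (h0 : 0 < c') (h1 : c' < c'') (γ : ℕ) :
    ∀ᶠ y : ℝ in atTop, c' * y + 1 + γ * (Real.logb 2 (8 * y) + 1) ≤ c'' * y := by
  obtain ⟨d, hd⟩ : ∃ d, d = c'' - c' := ⟨_, rfl⟩
  have hdpos : 0 < d := by rw [hd]; linarith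
  have hlog2 : 0 < Real.log 2 := Real.log_pos one_lt_two
  obtain ⟨ε, hε⟩ : ∃ ε, ε = d * Real.log 2 / (2 * ((γ:ℝ) + 1)) := ⟨_, rfl⟩
  have hεpos : 0 < ε := by rw [hε]; positivity
  have hlo := Real.isLittleO_log_id_atTop.def hεpos
  obtain ⟨C, hC⟩ : ∃ C, C = (γ : ℝ) * (Real.log 8 / Real.log 2 + 1) + 1 := ⟨_, rfl⟩
  filter_upwards [hlo, eventually_ge_atTop (1 : ℝ), eventually_ge_atTop (2 * C / d)]
    with y hy h1y hCy
  have hy0 : (0:ℝ) < y := lt_of_lt_of_le one_pos h1y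
  have hlogy : 0 ≤ Real.log y := Real.log_nonneg h1y
  rw [Real.norm_eq_abs, Real.norm_eq_abs, abs_of_nonneg hlogy] at hy
  rw [id_eq, abs_of_nonneg hy0.le] at hy
  have hlogb : Real.logb 2 (8 * y) = (Real.log 8 + Real.log y) / Real.log 2 := by
    rw [Real.logb, Real.log_mul (by norm_num) (ne_of_gt hy0)]
  rw [hlogb]
  have e2 : (γ : ℝ) * (Real.log y / Real.log 2) ≤ d * y / 2 := by
    have step1 : (γ : ℝ) * (Real.log y / Real.log 2) ≤ (γ : ℝ) * (ε * y / Real.log 2) := by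
      apply mul_le_mul_of_nonneg_left _ (Nat.cast_nonneg γ)
      exact div_le_div_of_nonneg_right hy hlog2.le
    refine le_trans step1 ?_
    have hγ1 : (0:ℝ) < (γ:ℝ) + 1 := by positivity
    have heq : (γ:ℝ) * (ε * y / Real.log 2) = ((γ:ℝ)/((γ:ℝ)+1)) * (d*y/2) := by
      rw [hε]; field_simp
    rw [heq]
    have hfrac : (γ:ℝ)/((γ:ℝ)+1) ≤ 1 := by rw [div_le_one hγ1]; linarith
    exact mul_le_of_le_one_left (by positivity) hfrac
  have e3 : C ≤ d * y / 2 := by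
    have h5 := (div_le_iff₀ hdpos).mp hCy
    nlinarith
  have expand : c' * y + 1 + γ * ((Real.log 8 + Real.log y) / Real.log 2 + 1)
      = c' * y + C + γ * (Real.log y / Real.log 2) := by
    rw [hC]; field_simp; ring
  rw [expand]
  nlinarith [e2, e3, hd]

/-- Let `0 < c' < c'' < 1/log 2`. For a sufficiently large constant `γ` (depending on
`c'`, `c''`) and all large `n`: in any graph `G` on `n` vertices with maximum degree at
most `4 log n` and with no path on `γ` vertices all of degree at least `c' log n`, no
vertex can ever acquire weight `n^{c'' log 2}`; consequently
`a_t(G) ≥ n^{1 − c'' log 2}`. -/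
theorem stmt15 (c' c'' : ℝ) (h0 : 0 < c') (h1 : c' < c'') (h2 : c'' < 1 / Real.log 2) :
    ∃ γ₀ : ℕ, ∀ γ : ℕ, γ₀ ≤ γ → ∀ᶠ n : ℕ in atTop,
      ∀ (V : Type) [Fintype V] [DecidableEq V] (G : SimpleGraph V) [DecidableRel G.Adj],
        Fintype.card V = n →
        (∀ v : V, (G.degree v : ℝ) ≤ 4 * Real.log n) →
        (¬ ∃ (u v : V) (p : G.Walk u v), p.IsPath ∧ p.support.length = γ ∧
          ∀ x ∈ p.support, c' * Real.log n ≤ (G.degree x : ℝ)) →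
        (∀ w : V → ℕ, AcqReach G (fun _ => 1) w →
          ∀ v : V, (w v : ℝ) < (n : ℝ) ^ (c'' * Real.log 2)) ∧
        (n : ℝ) ^ (1 - c'' * Real.log 2) ≤ (atNum G : ℝ) := by
  refine ⟨1, fun γ hγ => ?_⟩
  have hev := event_aux c' c'' h0 h1 γ
  have hcomp : Tendsto (fun n : ℕ => Real.log n) atTop atTop :=
    Real.tendsto_log_atTop.comp tendsto_natCast_atTop_atTop
  filter_upwards [hcomp.eventually hev, eventually_ge_atTop 3] with n hkey hn3
  intro V _ _ G _ hcard hdeg hpath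
  have hlog2 : 0 < Real.log 2 := Real.log_pos one_lt_two
  have hn0 : 0 < n := by omega
  have hnR : (0:ℝ) < (n:ℝ) := by exact_mod_cast hn0
  have hL1 : 1 ≤ Real.log n := by
    have h3 : Real.exp 1 ≤ (n:ℝ) := by
      have : Real.exp 1 < 2.7182818286 := Real.exp_one_lt_d9
      have h4 : (3:ℝ) ≤ (n:ℝ) := by exact_mod_cast hn3
      linarith
    calc (1:ℝ) = Real.log (Real.exp 1) := (Real.log_exp 1).symm
      _ ≤ Real.log n := Real.log_le_log (Real.exp_pos 1) h3
  have hL0 : (0:ℝ) < Real.log n := lt_of_lt_of_le one_pos hL1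
  obtain ⟨a, ha⟩ : ∃ a : ℕ, a = Nat.ceil (c' * Real.log n) := ⟨_, rfl⟩
  obtain ⟨b, hb⟩ : ∃ b : ℕ, b = Nat.floor (Real.logb 2 (8 * Real.log n)) + 1 := ⟨_, rfl⟩
  have hb1 : 1 ≤ b := by omega
  have hlogbnn : 0 ≤ Real.logb 2 (8 * Real.log n) :=
    Real.logb_nonneg one_lt_two (by linarith)
  have hbR : (b:ℝ) ≤ Real.logb 2 (8 * Real.log n) + 1 := by
    rw [hb]; push_cast
    have := Nat.floor_le hlogbnn
    linarith
  have haR2 : c' * Real.log n ≤ (a:ℝ) := by rw [ha]; exact Nat.le_ceil _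
  have haR : (a:ℝ) ≤ c' * Real.log n + 1 := by
    rw [ha]
    have := Nat.ceil_lt_add_one (show 0 ≤ c' * Real.log n by positivity)
    linarith
  -- degree bound in terms of 2^b
  have hdegb : ∀ x : V, 2 * G.degree x ≤ 2 ^ b := by
    intro x
    have h5 : (2:ℝ) * (G.degree x : ℝ) ≤ 8 * Real.log n := by
      have := hdeg x; linarith
    have h6 : 8 * Real.log n ≤ (2:ℝ) ^ b := by
      have h7 : (8 * Real.log n) = (2:ℝ) ^ (Real.logb 2 (8 * Real.log n)) :=
        (Real.rpow_logb two_pos (by norm_num) (by linarith)).symm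
      rw [h7, show ((2:ℝ)^b) = (2:ℝ)^((b:ℕ):ℝ) from (Real.rpow_natCast 2 b).symm]
      apply Real.rpow_le_rpow_of_exponent_le one_le_two
      have := Nat.lt_floor_add_one (Real.logb 2 (8 * Real.log n))
      rw [hb]; push_cast; linarith
    have h8 : ((2 * G.degree x : ℕ) : ℝ) ≤ ((2^b : ℕ) : ℝ) := by push_cast; linarith
    exact_mod_cast h8
  -- the exponent bound
  have hm : ((a + (γ-1) * b : ℕ) : ℝ) ≤ c'' * Real.log n := by
    push_cast
    have hγb : ((γ-1:ℕ):ℝ) ≤ (γ:ℝ) := by exact_mod_cast Nat.sub_le γ 1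
    have hbnn : (0:ℝ) ≤ (b:ℝ) := by positivity
    have hγnn : (0:ℝ) ≤ ((γ-1:ℕ):ℝ) := by positivity
    have hlogb1 : (0:ℝ) ≤ Real.logb 2 (8 * Real.log n) + 1 := by linarith
    calc (a:ℝ) + ((γ-1:ℕ):ℝ) * (b:ℝ)
        ≤ (c' * Real.log n + 1) + (γ:ℝ) * (Real.logb 2 (8 * Real.log n) + 1) := by
          have := mul_le_mul hγb hbR hbnn (Nat.cast_nonneg γ)
          linarith
      _ ≤ c'' * Real.log n := hkey
  -- Part 1
  have part1 : ∀ w : V → ℕ, AcqReach G (fun _ => 1) w →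
      ∀ v : V, (w v : ℝ) < (n : ℝ) ^ (c'' * Real.log 2) := by
    intro w hreach v
    by_contra hge
    push_neg at hge
    have hwv : 2 ^ (a + (γ-1)*b) ≤ w v := by
      have e1 : ((2:ℝ)) ^ ((a + (γ-1)*b : ℕ) : ℝ) ≤ (n:ℝ) ^ (c'' * Real.log 2) := by
        rw [show (n:ℝ) ^ (c'' * Real.log 2) = Real.exp (c'' * Real.log 2 * Real.log n) from by
          rw [Real.rpow_def_of_pos hnR]; ring_nf]
        rw [Real.rpow_def_of_pos two_pos]
        apply Real.exp_le_exp.mpr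
        have := hm
        nlinarith
      rw [Real.rpow_natCast] at e1
      have e4 : ((2 ^ (a + (γ-1)*b) : ℕ) : ℝ) ≤ (w v : ℝ) := by
        push_cast
        exact le_trans e1 hge
      exact_mod_cast e4
    obtain ⟨u', p, hpath', hlen, hdegp, -⟩ := chain a b hb1 hdegb (γ-1) w hreach v hwv
    apply hpath
    refine ⟨v, u', p, hpath', ?_, ?_⟩
    · rw [SimpleGraph.Walk.length_support, hlen]; omega
    · intro x hx
      exact le_trans haR2 (le_trans (by exact_mod_cast Nat.cast_le.mpr (hdegp x hx)) le_rfl)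
  refine ⟨part1, ?_⟩
  -- Part 2
  have hset_ne : { k | ∃ w, AcqReach G (fun _ => 1) w ∧ AcqMaximal G w ∧
      residualCard w = k}.Nonempty := by
    obtain ⟨w, hr, hmx⟩ := exists_maximal (G := G)
    exact ⟨residualCard w, w, hr, hmx, rfl⟩
  obtain ⟨w, hreach, hmax, hres⟩ :
      ∃ w, AcqReach G (fun _ => 1) w ∧ AcqMaximal G w ∧ residualCard w = atNum G :=
    Nat.sInf_mem hset_ne
  obtain ⟨S, hSdef⟩ : ∃ S, S = Finset.univ.filter (fun v => 0 < w v) := ⟨_, rfl⟩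
  have hsum : ∑ x, w x = n := by rw [sum_weight hreach, hcard]
  have hSsum : ∑ x ∈ S, w x = n := by
    rw [hSdef, Finset.sum_filter_of_ne (fun x _ hx => by omega), hsum]
  have hSne : S.Nonempty := by
    rw [Finset.nonempty_iff_ne_empty]
    intro hS0
    rw [hS0] at hSsum
    simp at hSsum
    omega
  have hW0 : (0:ℝ) < (n:ℝ) ^ (c'' * Real.log 2) := Real.rpow_pos_of_pos hnR _
  have hlt : (n:ℝ) < (S.card : ℝ) * (n:ℝ) ^ (c'' * Real.log 2) := by
    calc (n:ℝ) = ∑ x ∈ S, (w x : ℝ) := by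
          rw [← hSsum]; push_cast; rfl
      _ < ∑ x ∈ S, (n:ℝ) ^ (c'' * Real.log 2) :=
          Finset.sum_lt_sum_of_nonempty hSne (fun v hv => part1 w hreach v)
      _ = (S.card : ℝ) * (n:ℝ) ^ (c'' * Real.log 2) := by
          rw [Finset.sum_const, nsmul_eq_mul]
  have hcardS : (S.card : ℝ) = (atNum G : ℝ) := by
    have hq : (Finset.univ.filter (fun v => 0 < w v)).card = atNum G :=
      (residualCard_eq w).symm.trans hres
    rw [hSdef, hq]
  rw [Real.rpow_sub hnR, Real.rpow_one, div_le_iff₀ hW0]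
  rw [hcardS] at hlt
  linarith
end
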